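/- Fix R > 0 and t > 0, and let B_t = {(x, y, v_x, v_y) ∈ ℝ⁴ : x² + y² > R², x v_x + y v_y < 0, (x v_x + y v_y)² − (v_x² + v_y²)(x² + y² − R²) > 0, τ < t}, where τ = τ(x, y, v_x, v_y) is the first hitting time of the disk. Then τ is continuously differentiable on B_t with gradient ∇τ = (1/v_⊥)(cos θ, sin θ, τ cos θ, τ sin θ), where cos θ = (x + τ v_x)/R, sin θ = (y + τ v_y)/R and v_⊥ = −(v_x cos θ + v_y sin θ) > 0. Moreover, for any φ, ω ∈ ℝ, the function Φ(x, y, v_x, v_y) = φ + ω τ + (v_t/R)(t − τ), with v_t = (v_x y − v_y x)/R, is continuously differentiable on B_t with gradient ∇Φ = (ω − v_t/R)∇τ + ((t − τ)/R²)(−v_y, v_x, y, −x). -/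

import Mathlib

/-!
With `a = |v|²`, `b = ⟨q, v⟩`, `c = |q|² - R²`, the hitting time `τ = (-b - √D) / a` is the smaller
root of `a τ² + 2 b τ + c`; it is smooth where `a ≠ 0` and `D = b² - ac > 0`. Implicit
differentiation of the quadratic gives `dτ = (τ² da + 2τ db + dc) / (2√D)`, since
`aτ + b = -√D`. The latter identity reads `⟨q + τv, v⟩ = -√D`, i.e. `v_⊥ = √D / R`, which puts
`∇τ` in the stated form; `∇Φ` then follows from the product rule.
-/

/-- First hitting time of the disk of radius `R` centered at the origin, as a function of
the particle initial condition `p = (x, y, v_x, v_y)`. -/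
noncomputable def hitTime4 (R : ℝ) (p : Fin 4 → ℝ) : ℝ :=
  (-(p 0 * p 2 + p 1 * p 3) -
      Real.sqrt ((p 0 * p 2 + p 1 * p 3) ^ 2 -
        (p 2 ^ 2 + p 3 ^ 2) * (p 0 ^ 2 + p 1 ^ 2 - R ^ 2))) /
    (p 2 ^ 2 + p 3 ^ 2)

/-- The set `B_t` of initial conditions `(x, y, v_x, v_y)` with a transversal first disk
collision before time `t`. -/
def goodSetF (R t : ℝ) : Set (Fin 4 → ℝ) :=
  {p | R ^ 2 < p 0 ^ 2 + p 1 ^ 2 ∧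
       p 0 * p 2 + p 1 * p 3 < 0 ∧
       0 < (p 0 * p 2 + p 1 * p 3) ^ 2 -
            (p 2 ^ 2 + p 3 ^ 2) * (p 0 ^ 2 + p 1 ^ 2 - R ^ 2) ∧
       hitTime4 R p < t}

/-- The lifted angular position of the disk at time `t` after a single collision, for a
disk with initial state `(φ, ω)`: `Φ = φ + ωτ + (v_t/R)(t − τ)` with
`v_t = (v_x y − v_y x)/R`. -/
noncomputable def diskAngle (R t φ ω : ℝ) (p : Fin 4 → ℝ) : ℝ :=
  φ + ω * hitTime4 R p + ((p 2 * p 1 - p 3 * p 0) / R ^ 2) * (t - hitTime4 R p)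

/-- The smaller root of `a r² + 2 b r + c` when `a > 0`. -/
noncomputable def quadRoot (a b c : ℝ) : ℝ := (-b - √(b ^ 2 - a * c)) / a

theorem mul_quadRoot {a : ℝ} (b c : ℝ) (ha : a ≠ 0) :
    a * quadRoot a b c = -b - √(b ^ 2 - a * c) := by
  rw [quadRoot, mul_div_cancel₀ _ ha]

section
variable {E : Type*} [NormedAddCommGroup E] [NormedSpace ℝ E] {a b c : E → ℝ} {x : E}

theorem HasFDerivAt.quadRoot {a' b' c' : E →L[ℝ] ℝ} (ha : HasFDerivAt a a' x)
    (hb : HasFDerivAt b b' x) (hc : HasFDerivAt c c' x) (ha0 : a x ≠ 0)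
    (hD : 0 < b x ^ 2 - a x * c x) :
    HasFDerivAt (fun y => quadRoot (a y) (b y) (c y))
      ((2 * √(b x ^ 2 - a x * c x))⁻¹ •
        (quadRoot (a x) (b x) (c x) ^ 2 • a' + (2 * quadRoot (a x) (b x) (c x)) • b' + c'))
      x := by
  have hsqrt := ((hb.pow 2).sub (ha.mul hc)).sqrt hD.ne'
  have hinv := (hasDerivAt_inv ha0).comp_hasFDerivAt x ha
  have h := ((hb.neg.sub hsqrt).mul hinv).congr_of_eventuallyEq
    (Filter.Eventually.of_forall fun y => div_eq_mul_inv _ _)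
  refine h.congr_fderiv ?_
  have hr := mul_quadRoot (b x) (c x) ha0
  have hs : √(b x ^ 2 - a x * c x) ^ 2 = b x ^ 2 - a x * c x := Real.sq_sqrt hD.le
  have hs0 : √(b x ^ 2 - a x * c x) ≠ 0 := (Real.sqrt_pos.2 hD).ne'
  ext v
  simp only [Pi.sub_apply, Pi.mul_apply, Pi.neg_apply, neg_smul, smul_neg, Function.comp_apply,
    one_div, mul_inv_rev, Nat.add_one_sub_one, pow_one, nsmul_eq_mul, Nat.cast_ofNat, add_apply,
    neg_apply, smul_apply, smul_eq_mul, sub_apply, smul_add]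
  set r := _root_.quadRoot (a x) (b x) (c x)
  set s := √(b x ^ 2 - a x * c x)
  field_simp
  linear_combination a' v * hs - ((a x * r - b x - s) * a' v + 2 * a x * b' v) * hr

theorem ContDiffAt.quadRoot {n : WithTop ℕ∞} (ha : ContDiffAt ℝ n a x)
    (hb : ContDiffAt ℝ n b x) (hc : ContDiffAt ℝ n c x) (ha0 : a x ≠ 0)
    (hD : 0 < b x ^ 2 - a x * c x) :
    ContDiffAt ℝ n (fun y => quadRoot (a y) (b y) (c y)) x :=
  (hb.neg.sub (((hb.pow 2).sub (ha.mul hc)).sqrt hD.ne')).div ha ha0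

end

theorem hitTime4_eq_quadRoot (R : ℝ) :
    hitTime4 R = fun p => quadRoot (p 2 ^ 2 + p 3 ^ 2) (p 0 * p 2 + p 1 * p 3)
      (p 0 ^ 2 + p 1 ^ 2 - R ^ 2) := rfl

theorem speed_sq_pos {p : Fin 4 → ℝ} (hqv : p 0 * p 2 + p 1 * p 3 < 0) :
    0 < p 2 ^ 2 + p 3 ^ 2 := by
  have : p 2 ≠ 0 ∨ p 3 ≠ 0 := by
    by_contra! h
    simp [h] at hqv
  rcases this with h | h <;> positivity

section
variable (R : ℝ) {p : Fin 4 → ℝ} (hqv : p 0 * p 2 + p 1 * p 3 < 0)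
  (hD : 0 < (p 0 * p 2 + p 1 * p 3) ^ 2 - (p 2 ^ 2 + p 3 ^ 2) * (p 0 ^ 2 + p 1 ^ 2 - R ^ 2))
include hqv

theorem hitPoint_inner_velocity :
    (p 0 + hitTime4 R p * p 2) * p 2 + (p 1 + hitTime4 R p * p 3) * p 3 =
      -√((p 0 * p 2 + p 1 * p 3) ^ 2 - (p 2 ^ 2 + p 3 ^ 2) * (p 0 ^ 2 + p 1 ^ 2 - R ^ 2)) := by
  have h : (p 2 ^ 2 + p 3 ^ 2) * hitTime4 R p = _ := mul_quadRoot _ _ (speed_sq_pos hqv).ne'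
  linear_combination h

include hD

theorem contDiffAt_hitTime4 {n : WithTop ℕ∞} : ContDiffAt ℝ n (hitTime4 R) p := by
  rw [hitTime4_eq_quadRoot]
  exact ContDiffAt.quadRoot (by fun_prop) (by fun_prop) (by fun_prop) (speed_sq_pos hqv).ne' hD

theorem fderiv_hitTime4_apply (v : Fin 4 → ℝ) :
    fderiv ℝ (hitTime4 R) p v =
      ((p 0 + hitTime4 R p * p 2) * (v 0 + hitTime4 R p * v 2) +
        (p 1 + hitTime4 R p * p 3) * (v 1 + hitTime4 R p * v 3)) /
      √((p 0 * p 2 + p 1 * p 3) ^ 2 - (p 2 ^ 2 + p 3 ^ 2) * (p 0 ^ 2 + p 1 ^ 2 - R ^ 2)) := by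
  have hx (i : Fin 4) := hasFDerivAt_apply (𝕜 := ℝ) i p
  have h : HasFDerivAt (hitTime4 R) _ p :=
    HasFDerivAt.quadRoot (((hx 2).pow 2).add ((hx 3).pow 2))
      (((hx 0).mul (hx 2)).add ((hx 1).mul (hx 3)))
      ((((hx 0).pow 2).add ((hx 1).pow 2)).sub_const (R ^ 2)) (speed_sq_pos hqv).ne' hD
  have hτ : quadRoot (p 2 ^ 2 + p 3 ^ 2) (p 0 * p 2 + p 1 * p 3) (p 0 ^ 2 + p 1 ^ 2 - R ^ 2) =
      hitTime4 R p := rfl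
  rw [h.fderiv]
  simp only [Fin.isValue, mul_inv_rev, hτ, Nat.add_one_sub_one, pow_one, nsmul_eq_mul,
    Nat.cast_ofNat, smul_add, add_apply, smul_apply, ContinuousLinearMap.proj_apply, smul_eq_mul]
  field_simp
  ring

end

theorem fderiv_diskAngle_apply (R t φ ω : ℝ) {p : Fin 4 → ℝ}
    (hτ : DifferentiableAt ℝ (hitTime4 R) p) (v : Fin 4 → ℝ) :
    fderiv ℝ (diskAngle R t φ ω) p v =
      (ω - (p 2 * p 1 - p 3 * p 0) / R / R) * fderiv ℝ (hitTime4 R) p v +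
        ((t - hitTime4 R p) / R ^ 2) * (-(p 3) * v 0 + p 2 * v 1 + p 1 * v 2 + -(p 0) * v 3) := by
  have hx (i : Fin 4) := hasFDerivAt_apply (𝕜 := ℝ) i p
  have h : HasFDerivAt (diskAngle R t φ ω) _ p :=
    ((hasFDerivAt_const φ p).add ((hasFDerivAt_const ω p).mul hτ.hasFDerivAt)).add
      (((((hx 2).mul (hx 1)).sub ((hx 3).mul (hx 0))).mul_const (R ^ 2)⁻¹).mul
        ((hasFDerivAt_const t p).sub hτ.hasFDerivAt))
  rw [h.fderiv]
  simp only [smul_zero, add_zero, zero_add, Fin.isValue, Pi.sub_apply, Pi.mul_apply, zero_sub,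
    smul_neg, add_apply, smul_apply, smul_eq_mul, neg_apply, sub_apply,
    ContinuousLinearMap.proj_apply, neg_mul]
  ring

theorem contDiffAt_diskAngle {n : WithTop ℕ∞} (R t φ ω : ℝ) {p : Fin 4 → ℝ}
    (hτ : ContDiffAt ℝ n (hitTime4 R) p) : ContDiffAt ℝ n (diskAngle R t φ ω) p := by
  unfold diskAngle
  fun_prop

theorem hitTime_diskAngle_contDiffOn_general (R t : ℝ) (hR : 0 < R) (φ ω : ℝ) :
    ContDiffOn ℝ 1 (hitTime4 R) (goodSetF R t) ∧
    (∀ p ∈ goodSetF R t,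
      let τ := hitTime4 R p
      let c := (p 0 + τ * p 2) / R
      let s := (p 1 + τ * p 3) / R
      let vperp := -(p 2 * c + p 3 * s)
      0 < vperp ∧
      ∀ v : Fin 4 → ℝ,
        fderiv ℝ (hitTime4 R) p v =
          (1 / vperp) * (c * v 0 + s * v 1 + τ * c * v 2 + τ * s * v 3)) ∧
    ContDiffOn ℝ 1 (diskAngle R t φ ω) (goodSetF R t) ∧
    (∀ p ∈ goodSetF R t,
      let τ := hitTime4 R p
      let vt := (p 2 * p 1 - p 3 * p 0) / R
      ∀ v : Fin 4 → ℝ,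
        fderiv ℝ (diskAngle R t φ ω) p v =
          (ω - vt / R) * fderiv ℝ (hitTime4 R) p v +
            ((t - τ) / R ^ 2) *
              (-(p 3) * v 0 + p 2 * v 1 + p 1 * v 2 + -(p 0) * v 3)) := by
  have hτ : ∀ p ∈ goodSetF R t, ContDiffAt ℝ 1 (hitTime4 R) p :=
    fun p hp => contDiffAt_hitTime4 R hp.2.1 hp.2.2.1
  refine ⟨fun p hp => (hτ p hp).contDiffWithinAt, ?_,
    fun p hp => (contDiffAt_diskAngle R t φ ω (hτ p hp)).contDiffWithinAt, ?_⟩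
  · rintro p ⟨-, hqv, hD, -⟩
    have hvperp :
        -(p 2 * ((p 0 + hitTime4 R p * p 2) / R) + p 3 * ((p 1 + hitTime4 R p * p 3) / R)) =
          √((p 0 * p 2 + p 1 * p 3) ^ 2 -
            (p 2 ^ 2 + p 3 ^ 2) * (p 0 ^ 2 + p 1 ^ 2 - R ^ 2)) / R := by
      rw [← neg_neg √_, ← hitPoint_inner_velocity R hqv]
      ring
    intro τ c s vperp
    refine ⟨div_pos (Real.sqrt_pos.2 hD) hR |>.trans_eq hvperp.symm, fun v => ?_⟩
    rw [fderiv_hitTime4_apply R hqv hD, show vperp = _ from hvperp]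
    simp only [c, s, τ]
    field_simp
    ring
  · intro p hp τ vt v
    exact fderiv_diskAngle_apply R t φ ω ((hτ p hp).differentiableAt one_ne_zero) v

/-- On `B_t`, the first hitting time `τ` is continuously differentiable with gradient
`∇τ = (1/v_⊥)(cos θ, sin θ, τ cos θ, τ sin θ)` where `(R cos θ, R sin θ)` is the collision
point and `v_⊥ > 0` is the outward normal velocity component; moreover the lifted angular
position `Φ = φ + ωτ + (v_t/R)(t − τ)` is continuously differentiable with gradient
`∇Φ = (ω − v_t/R)∇τ + ((t − τ)/R²)(−v_y, v_x, y, −x)`. -/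
theorem hitTime_diskAngle_contDiffOn (R t : ℝ) (hR : 0 < R) (ht : 0 < t) (φ ω : ℝ) :
    ContDiffOn ℝ 1 (hitTime4 R) (goodSetF R t) ∧
    (∀ p ∈ goodSetF R t,
      let τ := hitTime4 R p
      let c := (p 0 + τ * p 2) / R
      let s := (p 1 + τ * p 3) / R
      let vperp := -(p 2 * c + p 3 * s)
      0 < vperp ∧
      ∀ v : Fin 4 → ℝ,
        fderiv ℝ (hitTime4 R) p v =
          (1 / vperp) * (c * v 0 + s * v 1 + τ * c * v 2 + τ * s * v 3)) ∧
    ContDiffOn ℝ 1 (diskAngle R t φ ω) (goodSetF R t) ∧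
    (∀ p ∈ goodSetF R t,
      let τ := hitTime4 R p
      let vt := (p 2 * p 1 - p 3 * p 0) / R
      ∀ v : Fin 4 → ℝ,
        fderiv ℝ (diskAngle R t φ ω) p v =
          (ω - vt / R) * fderiv ℝ (hitTime4 R) p v +
            ((t - τ) / R ^ 2) *
              (-(p 3) * v 0 + p 2 * v 1 + p 1 * v 2 + -(p 0) * v 3)) :=
  hitTime_diskAngle_contDiffOn_general R t hR φ ω
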